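/- Fix an integer c ≥ 1 and let h = c(c−1)/2. Let X_{+2} ⊂ {±1}^4 be the set of strings with coordinate sum +2 and X_{−2} ⊂ {±1}^4 the set of strings with coordinate sum −2. Let ν_c be the distribution on {±1}^{c²×4} that samples a matrix as follows: with probability 1/2, choose h+c of the c² rows uniformly at random and fill each chosen row with an independent uniformly random element of X_{+2}, filling each of the remaining h rows with an independent uniformly random element of X_{−2}; with probability 1/2, do the same with the roles of X_{+2} and X_{−2} swapped. Then ν_c is pairwise uniform on its 4c² bits: every single entry of the matrix is uniform on {±1}, and every pair of distinct entries has expected product 0. -/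

import Mathlib

open Finset

/-- The ±1 sign encoded by a Boolean (`true ↦ +1`). -/
noncomputable def sgn (b : Bool) : ℝ := if b then 1 else -1

/-- A distribution `μ` on `ι → Bool` is `j`-wise uniform: its marginal on every set of at most
`j` coordinates is uniform. -/
def kwiseUniform {ι : Type} [Fintype ι] [DecidableEq ι] (j : ℕ) (μ : (ι → Bool) → ℝ) : Prop :=
  ∀ A : Finset ι, A.card ≤ j → ∀ a : ι → Bool,
    ∑ x ∈ Finset.univ.filter (fun x : ι → Bool => ∀ i ∈ A, x i = a i), μ x
      = (1 / 2 : ℝ) ^ A.card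

/-- The ±1 sum of a row of the matrix `M`. -/
def rowSum {c : ℕ} (M : Fin (c ^ 2) × Fin 4 → Bool) (l : Fin (c ^ 2)) : ℤ :=
  ∑ i : Fin 4, (if M (l, i) then (1 : ℤ) else -1)

/-- The distribution ν_c on c²×4 ±1 matrices: with probability 1/2, a uniformly random set of
h+c rows (h = c(c-1)/2) is filled with independent uniform strings of sum +2 and the remaining
h rows with independent uniform strings of sum -2; with probability 1/2, the roles of +2 and
-2 are swapped.  This is the induced probability mass function. -/
noncomputable def nuC (c : ℕ) (M : Fin (c ^ 2) × Fin 4 → Bool) : ℝ :=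
  if ∀ l, rowSum M l = 2 ∨ rowSum M l = -2 then
    (if (Finset.univ.filter fun l => rowSum M l = 2).card = c * (c - 1) / 2 + c then
      (1 / 2 : ℝ) * (1 / (((c ^ 2).choose (c * (c - 1) / 2 + c) : ℕ) : ℝ))
        * (1 / 4 : ℝ) ^ (c ^ 2) else 0)
    + (if (Finset.univ.filter fun l => rowSum M l = -2).card = c * (c - 1) / 2 + c then
      (1 / 2 : ℝ) * (1 / (((c ^ 2).choose (c * (c - 1) / 2 + c) : ℕ) : ℝ))
        * (1 / 4 : ℝ) ^ (c ^ 2) else 0)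
  else 0

/-!
Fix the set `S` of rows that get row sum `+2` and the global sign. Then the rows of the matrix
are independent, each uniform on the four strings of its prescribed row sum `t = ±2`. On such a
row every bit has mean `t / 4` and two distinct bits are uncorrelated, so the global sign flip
kills all means and all correlations inside a row. For bits in rows `l ≠ l'` the correlation is
`E[σ_l σ_l'] / 4`, where `σ = ±1` marks membership in the uniformly random `k`-subset `S` of the
`n = c²` rows. Counting the `k`-subsets through one or two given rows gives
`n (n - 1) E[σ_l σ_l'] = (n - 2k)² - n`, which vanishes because `n - 2k = -c` with `k = h + c`.
A distribution whose Fourier coefficients of degree 1 and 2 vanish is pairwise uniform.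
-/

lemma ite_eq_eq_one_add_sgn_mul_sgn_div_two (x a : Bool) :
    (if x = a then (1 : ℝ) else 0) = (1 + sgn x * sgn a) / 2 := by
  cases x <;> cases a <;> norm_num [sgn]

theorem kwiseUniform_of_sum_mul_prod_sgn {ι : Type} [Fintype ι] [DecidableEq ι] (j : ℕ)
    (μ : (ι → Bool) → ℝ)
    (h : ∀ B : Finset ι, #B ≤ j → ∑ x, μ x * ∏ i ∈ B, sgn (x i) = if B = ∅ then 1 else 0) :
    kwiseUniform j μ := by
  intro A hA a
  calc ∑ x ∈ univ.filter (fun x : ι → Bool => ∀ i ∈ A, x i = a i), μ x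
      = ∑ x, μ x * ∏ i ∈ A, (1 + sgn (x i) * sgn (a i)) / 2 := by
        simp_rw [sum_filter, ← ite_eq_eq_one_add_sgn_mul_sgn_div_two, prod_boole, mul_ite,
          mul_one, mul_zero]
    _ = (1 / 2) ^ #A * ∑ B ∈ A.powerset,
          (∏ i ∈ B, sgn (a i)) * ∑ x, μ x * ∏ i ∈ B, sgn (x i) := by
        simp_rw [prod_div_distrib, prod_const, prod_one_add, prod_mul_distrib, mul_sum,
          div_eq_mul_inv, sum_mul, mul_sum]
        rw [sum_comm]
        refine sum_congr rfl fun B _ => sum_congr rfl fun x _ => ?_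
        rw [one_mul, inv_pow]
        ring
    _ = (1 / 2) ^ #A := by
        rw [sum_eq_single_of_mem ∅ (empty_mem_powerset A)]
        · simpa using h ∅ (by simp)
        · intro B hB hne
          rw [h B ((card_le_card (mem_powerset.1 hB)).trans hA), if_neg hne, mul_zero]

theorem kwiseUniform_two_of_moments {ι : Type} [Fintype ι] [DecidableEq ι]
    (μ : (ι → Bool) → ℝ) (hmass : ∑ x, μ x = 1) (hmean : ∀ p, ∑ x, μ x * sgn (x p) = 0)
    (hcorr : ∀ p q, p ≠ q → ∑ x, μ x * sgn (x p) * sgn (x q) = 0) :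
    kwiseUniform 2 μ := by
  refine kwiseUniform_of_sum_mul_prod_sgn 2 μ fun B hB => ?_
  obtain h | h | h : #B = 0 ∨ #B = 1 ∨ #B = 2 := by omega
  · simp [card_eq_zero.1 h, hmass]
  · obtain ⟨p, rfl⟩ := card_eq_one.1 h
    simp [hmean]
  · obtain ⟨p, q, hpq, rfl⟩ := card_eq_two.1 h
    simp [prod_pair hpq, ← mul_assoc, hcorr p q hpq]

section RandomSubset

variable {α : Type*} [DecidableEq α]

lemma card_filter_powersetCard_superset_mul_choose {T t : Finset α} (hT : T ⊆ t) (k : ℕ) :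
    #{S ∈ t.powersetCard k | T ⊆ S} * (#t).choose #T = (#t).choose k * k.choose #T := by
  rcases lt_or_ge k #T with hk | hk
  · rw [Nat.choose_eq_zero_of_lt hk, mul_zero, mul_eq_zero, card_eq_zero, filter_eq_empty_iff]
    left
    intro S hS hTS
    exact absurd (card_le_card hTS) (by rw [(mem_powersetCard.1 hS).2]; omega)
  · rw [card_filter_powersetCard_subset T t k hT hk, Nat.choose_mul hk, mul_comm]

def setSign {R : Type*} [Ring R] (S : Finset α) (a : α) : R := if a ∈ S then 1 else -1

@[simp, norm_cast]
lemma Int.cast_setSign {R : Type*} [Ring R] (S : Finset α) (a : α) :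
    ((setSign S a : ℤ) : R) = setSign S a := by
  unfold setSign; split_ifs <;> simp

lemma mul_setSign {R : Type*} [Ring R] (ε : R) (S : Finset α) (a : α) :
    ε * setSign S a = if a ∈ S then ε else -ε := by
  unfold setSign; split_ifs <;> simp

lemma mul_setSign_eq_or {ε : ℤ} (hε : ε = 2 ∨ ε = -2) (S : Finset α) (a : α) :
    ε * setSign S a = 2 ∨ ε * setSign S a = -2 := by
  rw [mul_setSign]
  split_ifs <;> rcases hε with rfl | rfl <;> norm_num

theorem card_mul_sub_one_mul_sum_setSign_mul_setSign [Fintype α] {a b : α} (hab : a ≠ b)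
    (k : ℕ) :
    (Fintype.card α * (Fintype.card α - 1) : ℝ) *
        ∑ S ∈ powersetCard k univ, setSign S a * setSign S b
      = (Fintype.card α).choose k * (((Fintype.card α : ℝ) - 2 * k) ^ 2 - Fintype.card α) := by
  set n := Fintype.card α
  let N : Finset α → ℝ := fun T => #{S ∈ powersetCard k univ | T ⊆ S}
  have hN : ∀ T : Finset α, N T * n.choose #T = n.choose k * k.choose #T := fun T => by
    have h := card_filter_powersetCard_superset_mul_choose (subset_univ T) k
    rw [card_univ] at h
    simp only [N]
    exact_mod_cast h
  have ha := hN {a}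
  have hb := hN {b}
  have hab₂ := hN {a, b}
  simp only [card_singleton, Nat.choose_one_right, card_pair hab, Nat.cast_choose_two]
    at ha hb hab₂
  have hsign : ∀ S : Finset α, (setSign S a * setSign S b : ℝ)
      = 4 * (if {a, b} ⊆ S then 1 else 0) - 2 * (if {a} ⊆ S then 1 else 0)
        - 2 * (if {b} ⊆ S then 1 else 0) + 1 := fun S => by
    by_cases ha : a ∈ S <;> by_cases hb : b ∈ S <;> norm_num [setSign, insert_subset_iff, ha, hb]
  have hsum : ∑ S ∈ powersetCard k univ, (setSign S a * setSign S b : ℝ)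
      = 4 * N {a, b} - 2 * N {a} - 2 * N {b} + n.choose k := by
    simp only [hsign, sum_add_distrib, sum_sub_distrib, ← mul_sum, sum_boole, N, sum_const,
      card_powersetCard, card_univ]
    simp [n]
  rw [hsum]
  linear_combination 8 * hab₂ - 2 * ((n : ℝ) - 1) * ha - 2 * ((n : ℝ) - 1) * hb

lemma ite_card_filter_eq_sum_powersetCard {ι β : Type*} [Fintype ι] [DecidableEq ι]
    [DecidableEq β] (f : ι → β) {u v : β} (huv : u ≠ v) (k : ℕ) :
    (if (∀ l, f l = u ∨ f l = v) ∧ #{l | f l = u} = k then (1 : ℝ) else 0)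
      = ∑ S ∈ powersetCard k univ, ∏ l, if f l = if l ∈ S then u else v then 1 else 0 := by
  have hS : ∀ S : Finset ι, (∀ l, f l = if l ∈ S then u else v)
      ↔ S = ({l | f l = u} : Finset ι) ∧ ∀ l, f l = u ∨ f l = v := by
    intro S
    refine ⟨fun h => ⟨?_, fun l => ?_⟩, fun ⟨hS, h⟩ l => ?_⟩
    · ext l
      have hl := h l
      split_ifs at hl with hlS <;> simp [hlS, hl, huv.symm]
    · have hl := h l
      split_ifs at hl <;> simp [hl]
    · subst hS
      by_cases hl : f l = u
      · simp [hl]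
      · simpa [hl] using h l
  simp_rw [Fintype.prod_boole, hS, ite_and]
  simp only [sum_ite_eq', mem_powersetCard_univ]
  by_cases h₁ : ∀ l, f l = u ∨ f l = v <;> by_cases h₂ : #{l | f l = u} = k <;> simp [h₁, h₂]

end RandomSubset

section RowProducts

variable {ι κ : Type*} [Fintype ι] [DecidableEq ι] [Fintype κ] [DecidableEq κ]

def prodLaw (ρ : ι → (κ → Bool) → ℝ) (M : ι × κ → Bool) : ℝ := ∏ l, ρ l (fun i => M (l, i))

lemma sum_prod_rows (G : ι → (κ → Bool) → ℝ) :
    ∑ M : ι × κ → Bool, ∏ l, G l (fun i => M (l, i)) = ∏ l, ∑ r, G l r := by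
  rw [← (Equiv.curry ι κ Bool).symm.sum_comp, prod_univ_sum, ← Fintype.piFinset_univ]
  rfl

lemma sum_prodLaw_mul_prod {ρ : ι → (κ → Bool) → ℝ} (hρ : ∀ l, ∑ r, ρ l r = 1) (s : Finset ι)
    (G : ι → (κ → Bool) → ℝ) :
    ∑ M, prodLaw ρ M * ∏ l ∈ s, G l (fun i => M (l, i)) = ∏ l ∈ s, ∑ r, ρ l r * G l r := by
  have hM : ∀ M : ι × κ → Bool, prodLaw ρ M * ∏ l ∈ s, G l (fun i => M (l, i))
      = ∏ l, ρ l (fun i => M (l, i)) * (if l ∈ s then G l (fun i => M (l, i)) else 1) := by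
    intro M
    rw [prod_mul_distrib, Fintype.prod_ite_mem, prodLaw]
  rw [sum_congr rfl fun M _ => hM M, sum_prod_rows fun l r => ρ l r * if l ∈ s then G l r else 1,
    ← Fintype.prod_ite_mem s]
  refine prod_congr rfl fun l _ => ?_
  split_ifs <;> simp [hρ]

end RowProducts

section RowLaw

def strSum {κ : Type*} [Fintype κ] (r : κ → Bool) : ℤ := ∑ i, if r i then 1 else -1

-- For `t = ±2` this is the uniform distribution on `X_t`, which has four elements.
noncomputable def rowLaw (t : ℤ) (r : Fin 4 → Bool) : ℝ := if strSum r = t then 1 / 4 else 0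

lemma sgn_eq_intCast (b : Bool) : sgn b = ((if b then 1 else -1 : ℤ) : ℝ) := by
  cases b <;> simp [sgn]

variable {t : ℤ} (ht : t = 2 ∨ t = -2)
include ht

lemma sum_rowLaw : ∑ r, rowLaw t r = 1 := by
  have h : #{r : Fin 4 → Bool | strSum r = t} = 4 := by rcases ht with rfl | rfl <;> decide
  simp [rowLaw, ← sum_filter, h]

lemma sum_rowLaw_mul_sgn (i : Fin 4) : ∑ r, rowLaw t r * sgn (r i) = t / 4 := by
  have h : ∑ r : Fin 4 → Bool with strSum r = t, (if r i then 1 else -1 : ℤ) = t := by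
    rcases ht with rfl | rfl <;> revert i <;> decide
  simp only [rowLaw, ite_mul, zero_mul, ← sum_filter, ← mul_sum, sgn_eq_intCast]
  rw [← Int.cast_sum, h]
  ring

lemma sum_rowLaw_mul_sgn_mul_sgn {i j : Fin 4} (hij : i ≠ j) :
    ∑ r, rowLaw t r * (sgn (r i) * sgn (r j)) = 0 := by
  have h : ∑ r : Fin 4 → Bool with strSum r = t,
      (if r i then 1 else -1 : ℤ) * (if r j then 1 else -1) = 0 := by
    rcases ht with rfl | rfl <;> revert i j <;> decide
  simp only [rowLaw, ite_mul, zero_mul, ← sum_filter, ← mul_sum, sgn_eq_intCast]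
  exact mul_eq_zero_of_right _ (by exact_mod_cast h)

end RowLaw

section RowTargets

variable {ι : Type*} [Fintype ι] {τ : ι → ℤ}

lemma prodLaw_rowLaw (M : ι × Fin 4 → Bool) :
    prodLaw (fun l => rowLaw (τ l)) M
      = (1 / 4) ^ Fintype.card ι * ∏ l, if strSum (fun i => M (l, i)) = τ l then 1 else 0 := by
  rw [← card_univ, ← prod_const, ← prod_mul_distrib]
  simp only [prodLaw, rowLaw, mul_ite, mul_one, mul_zero]

variable [DecidableEq ι] (hτ : ∀ l, τ l = 2 ∨ τ l = -2)
include hτ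

lemma sum_prodLaw_rowLaw : ∑ M, prodLaw (fun l => rowLaw (τ l)) M = 1 := by
  simpa using sum_prodLaw_mul_prod (fun l => sum_rowLaw (hτ l)) ∅ (fun _ _ => 1)

lemma sum_prodLaw_rowLaw_mul_sgn (l : ι) (i : Fin 4) :
    ∑ M, prodLaw (fun l => rowLaw (τ l)) M * sgn (M (l, i)) = τ l / 4 := by
  simpa [sum_rowLaw_mul_sgn (hτ l)] using
    sum_prodLaw_mul_prod (fun l => sum_rowLaw (hτ l)) {l} (fun _ r => sgn (r i))

lemma sum_prodLaw_rowLaw_mul_sgn_mul_sgn_of_eq {l : ι} {i j : Fin 4} (hij : i ≠ j) :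
    ∑ M, prodLaw (fun l => rowLaw (τ l)) M * (sgn (M (l, i)) * sgn (M (l, j))) = 0 := by
  simpa [sum_rowLaw_mul_sgn_mul_sgn (hτ l) hij] using
    sum_prodLaw_mul_prod (fun l => sum_rowLaw (hτ l)) {l} (fun _ r => sgn (r i) * sgn (r j))

lemma sum_prodLaw_rowLaw_mul_sgn_mul_sgn_of_ne {l l' : ι} (hl : l ≠ l') (i j : Fin 4) :
    ∑ M, prodLaw (fun l => rowLaw (τ l)) M * (sgn (M (l, i)) * sgn (M (l', j)))
      = τ l / 4 * (τ l' / 4) := by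
  simpa [prod_pair hl, hl.symm, sum_rowLaw_mul_sgn (hτ l), sum_rowLaw_mul_sgn (hτ l')] using
    sum_prodLaw_mul_prod (fun l => sum_rowLaw (hτ l)) {l, l'}
      (fun l'' r => sgn (r (if l'' = l then i else j)))

end RowTargets

lemma strSum_row {c : ℕ} (M : Fin (c ^ 2) × Fin 4 → Bool) (l : Fin (c ^ 2)) :
    strSum (fun i => M (l, i)) = rowSum M l := by
  rw [strSum, rowSum]

lemma two_mul_mul_sub_one_div_two_add_self (c : ℕ) :
    2 * (c * (c - 1) / 2 + c) = c ^ 2 + c := by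
  have h₁ : c * (c - 1) + c = c ^ 2 := by
    rw [Nat.mul_sub_one, Nat.sub_add_cancel (Nat.le_mul_self c), sq]
  have h₂ : 2 ∣ c * (c - 1) := (Nat.even_mul_pred_self c).two_dvd
  omega

lemma sum_powersetCard_setSign_mul_setSign (c : ℕ) {l l' : Fin (c ^ 2)} (hl : l ≠ l') :
    ∑ S ∈ powersetCard (c * (c - 1) / 2 + c) univ, (setSign S l * setSign S l' : ℝ) = 0 := by
  have hsum := card_mul_sub_one_mul_sum_setSign_mul_setSign hl (c * (c - 1) / 2 + c)
  have hk : (2 : ℝ) * ((c * (c - 1) / 2 + c : ℕ) : ℝ) = c ^ 2 + c := by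
    exact_mod_cast two_mul_mul_sub_one_div_two_add_self c
  have hn : (1 : ℝ) < c ^ 2 := by
    exact_mod_cast Fintype.card_fin (c ^ 2) ▸ Fintype.one_lt_card_iff.2 ⟨l, l', hl⟩
  have hpos : (c : ℝ) ^ 2 * ((c : ℝ) ^ 2 - 1) ≠ 0 := by
    have : (0 : ℝ) < c ^ 2 - 1 := by linarith
    positivity
  simp only [Fintype.card_fin, Nat.cast_pow, hk] at hsum
  refine (mul_eq_zero.1 (hsum.trans ?_)).resolve_left hpos
  ring

lemma nuC_eq_sum (c : ℕ) (M : Fin (c ^ 2) × Fin 4 → Bool) :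
    nuC c M = 1 / 2 * (1 / ((c ^ 2).choose (c * (c - 1) / 2 + c) : ℝ)) *
      ∑ S ∈ powersetCard (c * (c - 1) / 2 + c) univ,
        (prodLaw (fun l => rowLaw (2 * setSign S l)) M
          + prodLaw (fun l => rowLaw (-2 * setSign S l)) M) := by
  have e₁ := ite_card_filter_eq_sum_powersetCard (rowSum M) (by norm_num : (2 : ℤ) ≠ -2)
    (c * (c - 1) / 2 + c)
  have e₂ := ite_card_filter_eq_sum_powersetCard (rowSum M) (by norm_num : (-2 : ℤ) ≠ 2)
    (c * (c - 1) / 2 + c)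
  simp only [prodLaw_rowLaw, strSum_row, mul_setSign, neg_neg, Fintype.card_fin, ← mul_add,
    ← mul_sum, sum_add_distrib]
  -- `rw` rather than `simp`: `nuC` decides `∀ l` through a different instance than `e₁`, `e₂`
  rw [← e₁, ← e₂, nuC]
  simp only [show (∀ l, rowSum M l = -2 ∨ rowSum M l = 2) ↔ _ from forall_congr' fun l => or_comm,
    ite_and]
  split_ifs <;> ring

lemma sum_nuC_mul (c : ℕ) (φ : (Fin (c ^ 2) × Fin 4 → Bool) → ℝ) :
    ∑ M, nuC c M * φ M = 1 / 2 * (1 / ((c ^ 2).choose (c * (c - 1) / 2 + c) : ℝ)) *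
      ∑ S ∈ powersetCard (c * (c - 1) / 2 + c) univ,
        (∑ M, prodLaw (fun l => rowLaw (2 * setSign S l)) M * φ M
          + ∑ M, prodLaw (fun l => rowLaw (-2 * setSign S l)) M * φ M) := by
  simp_rw [nuC_eq_sum, mul_assoc, ← mul_sum, sum_mul, add_mul]
  rw [sum_comm]
  simp_rw [sum_add_distrib]

lemma sum_nuC (c : ℕ) : ∑ M, nuC c M = 1 := by
  have hk : c * (c - 1) / 2 + c ≤ c ^ 2 := by
    have := two_mul_mul_sub_one_div_two_add_self c
    have := Nat.le_self_pow two_ne_zero c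
    omega
  have hC : ((c ^ 2).choose (c * (c - 1) / 2 + c) : ℝ) ≠ 0 := by
    exact_mod_cast (Nat.choose_pos hk).ne'
  have h := sum_nuC_mul c fun _ => 1
  simp only [mul_one, sum_prodLaw_rowLaw (mul_setSign_eq_or (.inl rfl) _),
    sum_prodLaw_rowLaw (mul_setSign_eq_or (.inr rfl) _)] at h
  rw [h, sum_const, card_powersetCard, card_univ, Fintype.card_fin, nsmul_eq_mul]
  field_simp
  norm_num

lemma sum_nuC_mul_sgn (c : ℕ) (p : Fin (c ^ 2) × Fin 4) : ∑ M, nuC c M * sgn (M p) = 0 := by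
  simp only [sum_nuC_mul, sum_prodLaw_rowLaw_mul_sgn (mul_setSign_eq_or (.inl rfl) _),
    sum_prodLaw_rowLaw_mul_sgn (mul_setSign_eq_or (.inr rfl) _)]
  simp [neg_div]

lemma sum_nuC_mul_sgn_mul_sgn (c : ℕ) (p q : Fin (c ^ 2) × Fin 4) (hpq : p ≠ q) :
    ∑ M, nuC c M * sgn (M p) * sgn (M q) = 0 := by
  obtain ⟨l, i⟩ := p
  obtain ⟨l', j⟩ := q
  simp_rw [mul_assoc]
  rw [sum_nuC_mul]
  by_cases hl : l = l'
  · subst hl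
    have hij : i ≠ j := fun h => hpq (h ▸ rfl)
    simp only [sum_prodLaw_rowLaw_mul_sgn_mul_sgn_of_eq (mul_setSign_eq_or (.inl rfl) _) hij,
      sum_prodLaw_rowLaw_mul_sgn_mul_sgn_of_eq (mul_setSign_eq_or (.inr rfl) _) hij]
    simp
  · simp only [sum_prodLaw_rowLaw_mul_sgn_mul_sgn_of_ne (mul_setSign_eq_or (.inl rfl) _) hl,
      sum_prodLaw_rowLaw_mul_sgn_mul_sgn_of_ne (mul_setSign_eq_or (.inr rfl) _) hl]
    rw [sum_congr rfl fun S _ => show _ = (setSign S l * setSign S l' : ℝ) / 2 by push_cast; ring,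
      ← sum_div, sum_powersetCard_setSign_mul_setSign c hl]
    simp

theorem stmt17_general (c : ℕ) :
    kwiseUniform 2 (nuC c) ∧
    -- every single entry is uniform on ±1
    (∀ p : Fin (c ^ 2) × Fin 4,
      ∑ M ∈ Finset.univ.filter (fun M : Fin (c ^ 2) × Fin 4 → Bool => M p = true),
        nuC c M = 1 / 2) ∧
    -- every pair of distinct entries has expected product 0
    (∀ p q : Fin (c ^ 2) × Fin 4, p ≠ q →
      ∑ M : Fin (c ^ 2) × Fin 4 → Bool, nuC c M * sgn (M p) * sgn (M q) = 0) := by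
  have hpw : kwiseUniform 2 (nuC c) :=
    kwiseUniform_two_of_moments (nuC c) (sum_nuC c) (sum_nuC_mul_sgn c) (sum_nuC_mul_sgn_mul_sgn c)
  refine ⟨hpw, fun p => ?_, sum_nuC_mul_sgn_mul_sgn c⟩
  simpa using hpw {p} (by simp) fun _ => true

/-- ν_c is pairwise uniform on its 4c² bits. -/
theorem stmt17 (c : ℕ) (hc : 1 ≤ c) :
    kwiseUniform 2 (nuC c) ∧
    -- every single entry is uniform on ±1
    (∀ p : Fin (c ^ 2) × Fin 4,
      ∑ M ∈ Finset.univ.filter (fun M : Fin (c ^ 2) × Fin 4 → Bool => M p = true),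
        nuC c M = 1 / 2) ∧
    -- every pair of distinct entries has expected product 0
    (∀ p q : Fin (c ^ 2) × Fin 4, p ≠ q →
      ∑ M : Fin (c ^ 2) × Fin 4 → Bool, nuC c M * sgn (M p) * sgn (M q) = 0) :=
  stmt17_general c
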